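/- arXiv:2410.02544 — 6 statements merged into one kernel-verified Lean document; each statement's English description precedes it below -/
import Mathlib

section
/- (Locality theorem, tightness direction) For every vertex u of a finite graph G with core number c = core(u), the number of neighbors v of u with core(v) ≥ c + 1 is strictly less than c + 1. -/
/-- A set `S` of vertices is `k`-core closed if every vertex of `S`
has at least `k` neighbors inside `S`. -/
def CoreClosed {V : Type*} (G : SimpleGraph V) (k : ℕ) (S : Set V) : Prop :=
  ∀ u ∈ S, k ≤ Set.ncard {v ∈ S | G.Adj u v}

/-- The vertex set of the `k`-core of `G`: the union of all `k`-core closed sets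
(equivalently, the maximal induced subgraph of minimum degree at least `k`). -/
def kCore {V : Type*} (G : SimpleGraph V) (k : ℕ) : Set V :=
  {v | ∃ S : Set V, CoreClosed G k S ∧ v ∈ S}

/-- The core number of `u`: the largest `k` such that `u` lies in the `k`-core. -/
noncomputable def coreNum {V : Type*} (G : SimpleGraph V) (u : V) : ℕ :=
  sSup {k | u ∈ kCore G k}

/-- Locality, tightness direction: a vertex with core number `c` has strictly
fewer than `c + 1` neighbors whose core numbers are at least `c + 1`. -/
theorem stmt_4 {V : Type*} [Fintype V] (G : SimpleGraph V) (u : V)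
    (c : ℕ) (hc : c = coreNum G u) :
    Set.ncard {v | G.Adj u v ∧ c + 1 ≤ coreNum G v} < c + 1 := by
  have hsub : ∀ k, CoreClosed G k (kCore G k) := by
    intro k v hv
    obtain ⟨S, hS, hvS⟩ := hv
    calc k ≤ Set.ncard {w ∈ S | G.Adj v w} := hS v hvS
    _ ≤ Set.ncard {w ∈ kCore G k | G.Adj v w} := by
        apply Set.ncard_le_ncard _ (Set.toFinite _)
        rintro w ⟨hwS, hadj⟩
        exact ⟨⟨S, hS, hwS⟩, hadj⟩
  have hmono : ∀ (j k : ℕ) (v : V), j ≤ k → v ∈ kCore G k → v ∈ kCore G j := by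
    rintro j k v hjk ⟨S, hS, hvS⟩
    exact ⟨S, fun w hw => le_trans hjk (hS w hw), hvS⟩
  have hbdd : ∀ v : V, BddAbove {k | v ∈ kCore G k} := by
    intro v
    refine ⟨Fintype.card V, ?_⟩
    rintro k ⟨S, hS, hvS⟩
    calc k ≤ Set.ncard {w ∈ S | G.Adj v w} := hS v hvS
    _ ≤ (Set.univ : Set V).ncard :=
        Set.ncard_le_ncard (Set.subset_univ _) (Set.toFinite _)
    _ = Fintype.card V := by simp [Set.ncard_univ, Nat.card_eq_fintype_card]
  have hmem : ∀ v : V, v ∈ kCore G (coreNum G v) := by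
    intro v
    have hne : (0 : ℕ) ∈ {k | v ∈ kCore G k} :=
      ⟨{v}, fun w _ => Nat.zero_le _, rfl⟩
    exact Nat.sSup_mem ⟨0, hne⟩ (hbdd v)
  by_contra h
  push_neg at h
  -- u lies in the (c+1)-core via S = insert u (kCore G (c+1))
  set S : Set V := insert u (kCore G (c + 1)) with hSdef
  have hclosed : CoreClosed G (c + 1) S := by
    intro v hv
    rcases hv with rfl | hv
    · calc c + 1 ≤ Set.ncard {w | G.Adj v w ∧ c + 1 ≤ coreNum G w} := h
      _ ≤ Set.ncard {w ∈ S | G.Adj v w} := by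
          apply Set.ncard_le_ncard _ (Set.toFinite _)
          rintro w ⟨hadj, hcw⟩
          exact ⟨Set.mem_insert_of_mem _ (hmono _ _ w hcw (hmem w)), hadj⟩
    · calc c + 1 ≤ Set.ncard {w ∈ kCore G (c+1) | G.Adj v w} := hsub (c+1) v hv
      _ ≤ Set.ncard {w ∈ S | G.Adj v w} := by
          apply Set.ncard_le_ncard _ (Set.toFinite _)
          rintro w ⟨hw, hadj⟩
          exact ⟨Set.mem_insert_of_mem _ hw, hadj⟩
  have : c + 1 ≤ coreNum G u :=
    le_csSup (hbdd u) ⟨S, hclosed, Set.mem_insert _ _⟩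
  omega
end

section
/- (Locality characterization) For every vertex u of a finite graph G, core(u) equals the largest natural number k such that u has at least k neighbors whose core numbers are at least k. -/
section Aux

variable {V : Type*} [Fintype V] (G : SimpleGraph V)

lemma coreClosed_kCore (k : ℕ) : CoreClosed G k (kCore G k) := by
  intro u hu
  obtain ⟨S, hS, huS⟩ := hu
  calc k ≤ Set.ncard {v ∈ S | G.Adj u v} := hS u huS
    _ ≤ Set.ncard {v ∈ kCore G k | G.Adj u v} := by
        apply Set.ncard_le_ncard _ (Set.toFinite _)
        rintro v ⟨hv, ha⟩
        exact ⟨⟨S, hS, hv⟩, ha⟩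

lemma bddAbove_core (u : V) : BddAbove {k | u ∈ kCore G k} := by
  refine ⟨Nat.card V, fun k hk => ?_⟩
  obtain ⟨S, hS, huS⟩ := hk
  calc k ≤ Set.ncard {v ∈ S | G.Adj u v} := hS u huS
    _ ≤ Set.ncard (Set.univ : Set V) :=
        Set.ncard_le_ncard (Set.subset_univ _) (Set.toFinite _)
    _ = Nat.card V := Set.ncard_univ V

lemma mem_kCore_zero (u : V) : u ∈ kCore G 0 :=
  ⟨Set.univ, fun _ _ => Nat.zero_le _, Set.mem_univ u⟩

lemma mem_kCore_coreNum (u : V) : u ∈ kCore G (coreNum G u) :=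
  Nat.sSup_mem ⟨0, mem_kCore_zero G u⟩ (bddAbove_core G u)

lemma kCore_anti {j k : ℕ} (h : j ≤ k) : kCore G k ⊆ kCore G j := by
  rintro v ⟨S, hS, hv⟩
  exact ⟨S, fun w hw => le_trans h (hS w hw), hv⟩

lemma le_coreNum_iff {k : ℕ} (u : V) : k ≤ coreNum G u ↔ u ∈ kCore G k := by
  constructor
  · intro h; exact kCore_anti G h (mem_kCore_coreNum G u)
  · intro h; exact le_csSup (bddAbove_core G u) h

end Aux

/-- Locality characterization: the core number of `u` is the largest `k` such
that `u` has at least `k` neighbors whose core numbers are at least `k`. -/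
theorem stmt_5 {V : Type*} [Fintype V] (G : SimpleGraph V) (u : V) :
    coreNum G u = sSup {k : ℕ | k ≤ Set.ncard {v | G.Adj u v ∧ k ≤ coreNum G v}} := by
  apply le_antisymm
  · apply le_csSup
    · refine ⟨Nat.card V, fun k hk => le_trans hk ?_⟩
      calc Set.ncard {v | G.Adj u v ∧ k ≤ coreNum G v}
          ≤ Set.ncard (Set.univ : Set V) :=
            Set.ncard_le_ncard (Set.subset_univ _) (Set.toFinite _)
        _ = Nat.card V := Set.ncard_univ V
    · show coreNum G u ≤ Set.ncard {v | G.Adj u v ∧ coreNum G u ≤ coreNum G v}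
      calc coreNum G u
          ≤ Set.ncard {v ∈ kCore G (coreNum G u) | G.Adj u v} :=
            coreClosed_kCore G _ u (mem_kCore_coreNum G u)
        _ ≤ Set.ncard {v | G.Adj u v ∧ coreNum G u ≤ coreNum G v} := by
            apply Set.ncard_le_ncard _ (Set.toFinite _)
            rintro v ⟨hv, ha⟩
            exact ⟨ha, (le_coreNum_iff G v).mpr hv⟩
  · apply csSup_le ⟨0, by simp⟩
    intro k hk
    rw [le_coreNum_iff]
    refine ⟨kCore G k ∪ {u}, ?_, Set.mem_union_right _ rfl⟩
    intro w hw
    rcases hw with hw | hw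
    · calc k ≤ Set.ncard {v ∈ kCore G k | G.Adj w v} := coreClosed_kCore G k w hw
        _ ≤ Set.ncard {v ∈ kCore G k ∪ {u} | G.Adj w v} := by
            apply Set.ncard_le_ncard _ (Set.toFinite _)
            rintro v ⟨hv, ha⟩
            exact ⟨Set.mem_union_left _ hv, ha⟩
    · rcases hw with rfl
      calc k ≤ Set.ncard {v | G.Adj w v ∧ k ≤ coreNum G v} := hk
        _ ≤ Set.ncard {v ∈ kCore G k ∪ {w} | G.Adj w v} := by
            apply Set.ncard_le_ncard _ (Set.toFinite _)
            rintro v ⟨ha, hv⟩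
            exact ⟨Set.mem_union_left _ ((le_coreNum_iff G v).mp hv), ha⟩
end

section
/- If an assignment f : V → ℕ satisfies, for every vertex u, that f(u) ≤ |{v ∈ adj(u) : f(v) ≥ f(u)}|, then f(u) ≤ core(u) for every vertex u. -/
/-- If `f : V → ℕ` satisfies `f u ≤ |{v ∈ adj(u) : f v ≥ f u}|` at every vertex,
then `f` is a lower bound on the core numbers. -/
theorem stmt_6 {V : Type*} [Fintype V] (G : SimpleGraph V) (f : V → ℕ)
    (hf : ∀ u : V, f u ≤ Set.ncard {v | G.Adj u v ∧ f u ≤ f v}) :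
    ∀ u : V, f u ≤ coreNum G u := by
  intro u
  have hmem : u ∈ kCore G (f u) := by
    refine ⟨{v | f u ≤ f v}, ?_, show f u ≤ f u from le_rfl⟩
    intro w hw
    calc f u ≤ f w := hw
      _ ≤ Set.ncard {v | G.Adj w v ∧ f w ≤ f v} := hf w
      _ ≤ Set.ncard {v ∈ {v | f u ≤ f v} | G.Adj w v} := by
          apply Set.ncard_le_ncard
          · rintro v ⟨hadj, hle⟩
            exact ⟨le_trans hw hle, hadj⟩
          · exact Set.toFinite _
  have hbdd : BddAbove {k | u ∈ kCore G k} := by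
    refine ⟨Fintype.card V, ?_⟩
    rintro k ⟨S, hS, huS⟩
    calc k ≤ Set.ncard {v ∈ S | G.Adj u v} := hS u huS
      _ ≤ Set.ncard (Set.univ : Set V) := Set.ncard_le_ncard (Set.subset_univ _) (Set.toFinite _)
      _ = Fintype.card V := Set.ncard_univ V ▸ Nat.card_eq_fintype_card
  exact le_csSup hbdd hmem
end

section
/- (Monotone decrease of estimates) In the distributed k-core decomposition, if each vertex u maintains an estimate initialized to deg(u) and repeatedly replaces its estimate e(u) by the largest k ≤ e(u) with |{v ∈ adj(u) : e(v) ≥ k}| ≥ k (based on neighbor estimates), then at every step the estimate of every vertex is at least its true core number: e(u) ≥ core(u). -/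
lemma kCore_le_degree {V : Type*} [Fintype V] (G : SimpleGraph V) [DecidableRel G.Adj]
    {v : V} {k : ℕ} (h : v ∈ kCore G k) : k ≤ G.degree v := by
  obtain ⟨S, hS, hv⟩ := h
  have h1 : k ≤ Set.ncard {w ∈ S | G.Adj v w} := hS v hv
  have h2 : {w ∈ S | G.Adj v w} ⊆ G.neighborSet v := fun w hw => hw.2
  have h3 : Set.ncard {w ∈ S | G.Adj v w} ≤ Set.ncard (G.neighborSet v) :=
    Set.ncard_le_ncard h2 (Set.toFinite _)
  have h4 : Set.ncard (G.neighborSet v) = G.degree v := by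
    rw [← SimpleGraph.card_neighborSet_eq_degree, Set.ncard_eq_toFinset_card']
    simp
  omega

lemma bdd_core {V : Type*} [Fintype V] (G : SimpleGraph V) [DecidableRel G.Adj] (v : V) :
    BddAbove {k | v ∈ kCore G k} :=
  ⟨G.degree v, fun _ hk => kCore_le_degree G hk⟩

lemma mem_kCore_coreNum_s8 {V : Type*} [Fintype V] (G : SimpleGraph V) [DecidableRel G.Adj]
    (v : V) : v ∈ kCore G (coreNum G v) := by
  have hne : 0 ∈ {k | v ∈ kCore G k} := by
    exact ⟨Set.univ, fun u _ => Nat.zero_le _, Set.mem_univ v⟩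
  exact Nat.sSup_mem ⟨0, hne⟩ (bdd_core G v)

lemma le_coreNum {V : Type*} [Fintype V] (G : SimpleGraph V) [DecidableRel G.Adj]
    {S : Set V} {k : ℕ} (hS : CoreClosed G k S) {v : V} (hv : v ∈ S) :
    k ≤ coreNum G v :=
  le_csSup (bdd_core G v) ⟨S, hS, hv⟩

/-- Monotone decrease of estimates: starting from the degrees, if at each step one
vertex `u₀` replaces its estimate by the largest `k ≤ e i u₀` such that at least `k`
neighbors have estimate at least `k`, then every estimate stays at least the true
core number. -/
theorem stmt_8 {V : Type*} [Fintype V] (G : SimpleGraph V) [DecidableRel G.Adj]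
    (e : ℕ → V → ℕ)
    (h0 : ∀ u : V, e 0 u = G.degree u)
    (hstep : ∀ i : ℕ, ∃ u₀ : V,
      e (i + 1) u₀ =
        sSup {k : ℕ | k ≤ e i u₀ ∧ k ≤ Set.ncard {v | G.Adj u₀ v ∧ k ≤ e i v}} ∧
      ∀ w : V, w ≠ u₀ → e (i + 1) w = e i w) :
    ∀ (i : ℕ) (u : V), coreNum G u ≤ e i u := by
  intro i
  induction i with
  | zero =>
    intro u
    rw [h0 u]
    exact kCore_le_degree G (mem_kCore_coreNum_s8 G u)
  | succ i ih =>
    intro u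
    obtain ⟨u₀, h1, h2⟩ := hstep i
    by_cases hu : u = u₀
    · subst hu
      rw [h1]
      set c := coreNum G u with hc
      obtain ⟨S, hS, huS⟩ := mem_kCore_coreNum_s8 G u
      have hmem : c ∈ {k : ℕ | k ≤ e i u ∧ k ≤ Set.ncard {v | G.Adj u v ∧ k ≤ e i v}} := by
        constructor
        · exact ih u
        · have hsub : {v ∈ S | G.Adj u v} ⊆ {v | G.Adj u v ∧ c ≤ e i v} := by
            intro v ⟨hvS, hadj⟩
            exact ⟨hadj, le_trans (le_coreNum G hS hvS) (ih v)⟩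
          exact le_trans (hS u huS) (Set.ncard_le_ncard hsub (Set.toFinite _))
      exact le_csSup ⟨e i u, fun k hk => hk.1⟩ hmem
    · rw [h2 u hu]; exact ih u
end

section
/- (Fixed point is core number) If an assignment e : V → ℕ satisfies e(u) ≤ deg(u) for all u, e(u) ≥ core(u) for all u, and for every vertex u the value e(u) is the largest k such that |{v ∈ adj(u) : e(v) ≥ k}| ≥ k, then e(u) = core(u) for every vertex u. -/
/-- A fixed point of the locality condition that is bounded by the degrees and
bounded below by the core numbers is exactly the core-number function. -/
theorem stmt_9 {V : Type*} [Fintype V] (G : SimpleGraph V) [DecidableRel G.Adj]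
    (e : V → ℕ)
    (hdeg : ∀ u : V, e u ≤ G.degree u)
    (hcore : ∀ u : V, coreNum G u ≤ e u)
    (hfix : ∀ u : V, e u = sSup {k : ℕ | k ≤ Set.ncard {v | G.Adj u v ∧ k ≤ e v}}) :
    ∀ u : V, e u = coreNum G u := by
  have hdegcard : ∀ v : V, (G.neighborSet v).ncard = G.degree v := by
    intro v
    rw [Set.ncard_eq_toFinset_card']
    simp [SimpleGraph.degree, SimpleGraph.neighborFinset]
  have hmem : ∀ v, e v ≤ Set.ncard {w | G.Adj v w ∧ e v ≤ e w} := by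
    intro v
    have hbdd : BddAbove {k : ℕ | k ≤ Set.ncard {w | G.Adj v w ∧ k ≤ e w}} := by
      refine ⟨G.degree v, fun m hm => ?_⟩
      calc m ≤ Set.ncard {w | G.Adj v w ∧ m ≤ e w} := hm
        _ ≤ (G.neighborSet v).ncard :=
            Set.ncard_le_ncard (fun w hw => hw.1) (Set.toFinite _)
        _ = G.degree v := hdegcard v
    have h0 : (0:ℕ) ∈ {k : ℕ | k ≤ Set.ncard {w | G.Adj v w ∧ k ≤ e w}} := by simp
    have hs := Nat.sSup_mem ⟨0, h0⟩ hbdd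
    rw [← hfix v] at hs
    exact hs
  intro u
  refine le_antisymm ?_ (hcore u)
  have hclosed : CoreClosed G (e u) {v | e u ≤ e v} := by
    intro v hv
    calc e u ≤ e v := hv
      _ ≤ Set.ncard {w | G.Adj v w ∧ e v ≤ e w} := hmem v
      _ ≤ Set.ncard {w ∈ {x | e u ≤ e x} | G.Adj v w} :=
          Set.ncard_le_ncard (fun w hw => ⟨le_trans hv hw.2, hw.1⟩) (Set.toFinite _)
  have hker : u ∈ kCore G (e u) := ⟨_, hclosed, le_refl (e u)⟩
  have hbdd2 : BddAbove {k : ℕ | u ∈ kCore G k} := by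
    refine ⟨G.degree u, fun m hm => ?_⟩
    obtain ⟨S, hS, huS⟩ := hm
    calc m ≤ Set.ncard {v ∈ S | G.Adj u v} := hS u huS
      _ ≤ (G.neighborSet u).ncard :=
          Set.ncard_le_ncard (fun w hw => hw.2) (Set.toFinite _)
      _ = G.degree u := hdegcard u
  exact le_csSup hbdd2 hker
end

section
/- (Work bound for the distributed algorithm) In the distributed k-core decomposition where a vertex u re-notifies all its neighbors each time its estimate strictly decreases by one, the total number of messages sent is at most Σ_{u∈V} deg(u) · (deg(u) − core(u) + 1). -/
/-- Work bound: each vertex sends `deg(u)` messages at initialization and `deg(u)`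
messages each time its estimate strictly decreases; since estimates start at the
degrees, strictly decrease at updates, and never drop below the core numbers, the
total number of messages is at most `Σ_u deg(u) · (deg(u) − core(u) + 1)`. -/
theorem stmt_19 {V : Type*} [Fintype V] (G : SimpleGraph V) [DecidableRel G.Adj]
    (L : ℕ) (e : ℕ → V → ℕ) (upd : ℕ → V)
    (h0 : ∀ u : V, e 0 u = G.degree u)
    (hstep : ∀ i : ℕ, i < L →
      e (i + 1) (upd i) < e i (upd i) ∧
      ∀ w : V, w ≠ upd i → e (i + 1) w = e i w)
    (hlb : ∀ (i : ℕ) (u : V), i ≤ L → coreNum G u ≤ e i u) :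
    (∑ u : V, G.degree u) + ∑ i ∈ Finset.range L, G.degree (upd i) ≤
      ∑ u : V, G.degree u * (G.degree u - coreNum G u + 1) := by
  classical
  -- count of updates at each vertex
  set c : V → ℕ := fun u => ((Finset.range L).filter (fun i => upd i = u)).card with hc
  -- key invariant
  have key : ∀ n, n ≤ L → ∀ u : V,
      e n u + ((Finset.range n).filter (fun i => upd i = u)).card ≤ e 0 u := by
    intro n
    induction n with
    | zero => intro _ u; simp
    | succ n ih =>
      intro hn u
      have hn' : n ≤ L := Nat.le_of_succ_le hn
      have hnL : n < L := hn
      have hrange : (Finset.range (n+1)).filter (fun i => upd i = u)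
          = if upd n = u then insert n ((Finset.range n).filter (fun i => upd i = u))
            else (Finset.range n).filter (fun i => upd i = u) := by
        rw [Finset.range_add_one, Finset.filter_insert]
      by_cases h : upd n = u
      · have hmem : n ∉ (Finset.range n).filter (fun i => upd i = u) := by simp
        have hcard : ((Finset.range (n+1)).filter (fun i => upd i = u)).card
            = ((Finset.range n).filter (fun i => upd i = u)).card + 1 := by
          rw [hrange, if_pos h, Finset.card_insert_of_notMem hmem]
        have hdec : e (n+1) u < e n u := by
          have := (hstep n hnL).1; rwa [h] at this
        calc e (n+1) u + ((Finset.range (n+1)).filter (fun i => upd i = u)).card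
            = e (n+1) u + 1 + ((Finset.range n).filter (fun i => upd i = u)).card := by
              rw [hcard]; ring
          _ ≤ e n u + ((Finset.range n).filter (fun i => upd i = u)).card := by
              have : e (n+1) u + 1 ≤ e n u := hdec
              omega
          _ ≤ e 0 u := ih hn' u
      · have hcard : ((Finset.range (n+1)).filter (fun i => upd i = u)).card
            = ((Finset.range n).filter (fun i => upd i = u)).card := by
          rw [hrange, if_neg h]
        have heq : e (n+1) u = e n u := (hstep n hnL).2 u (fun hu => h hu.symm)
        rw [hcard, heq]; exact ih hn' u
  have hcu : ∀ u : V, c u ≤ G.degree u - coreNum G u := by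
    intro u
    show ((Finset.range L).filter (fun i => upd i = u)).card ≤ _
    have h1 := key L le_rfl u
    have h2 := hlb L u le_rfl
    rw [h0 u] at h1
    omega
  -- rewrite sum over steps as fiberwise sum
  have hsum : ∑ i ∈ Finset.range L, G.degree (upd i)
      = ∑ u : V, G.degree u * c u := by
    rw [hc]
    rw [← Finset.sum_fiberwise (Finset.range L) upd (fun i => G.degree (upd i))]
    refine Finset.sum_congr rfl fun u _ => ?_
    rw [Finset.sum_congr rfl (fun i hi => ?_), Finset.sum_const, smul_eq_mul, mul_comm]
    · simp only [Finset.mem_filter] at hi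
      rw [hi.2]
  rw [hsum]
  rw [← Finset.sum_add_distrib]
  refine Finset.sum_le_sum fun u _ => ?_
  have := hcu u
  calc G.degree u + G.degree u * c u
      ≤ G.degree u + G.degree u * (G.degree u - coreNum G u) :=
        Nat.add_le_add_left (Nat.mul_le_mul_left _ this) _
    _ = G.degree u * (G.degree u - coreNum G u + 1) := by ring
end
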